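/- arXiv:1808.01071 — 3 statements merged into one kernel-verified Lean document; each statement's English description precedes it below -/
import Mathlib

section
/- Two p-strings X and Y of equal length parameterized-match (i.e., there exists a bijection f on Σ ∪ Π with f(a) = a for all a ∈ Σ and f(X[i]) = Y[i] for all i) if and only if their previous encodings are equal: prev(X) = prev(Y). -/
open List

variable {α : Type} [DecidableEq α]

/-- The previous encoding entry at (0-based) position `i` of a p-string `S`,
over static alphabet `Sig`. -/
def prevEncAt (Sig : Set α) [DecidablePred (· ∈ Sig)] (S : List α) (i : ℕ) : α ⊕ ℕ :=
  match S[i]? with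
  | none => Sum.inr 0
  | some c =>
    if c ∈ Sig then Sum.inl c
    else if (List.range i).any (fun j => decide (S[j]? = some c)) then
      Sum.inr (i - Nat.findGreatest (fun j => S[j]? = some c) (i - 1))
    else Sum.inr 0

/-- The previous encoding of a p-string `S`. -/
def prevEnc (Sig : Set α) [DecidablePred (· ∈ Sig)] (S : List α) : List (α ⊕ ℕ) :=
  (List.range S.length).map (prevEncAt Sig S)

/-- Two p-strings parameterized match: equal length and a bijection on characters
fixing the static alphabet pointwise maps one onto the other. -/
def PMatch (Sig : Set α) (X Y : List α) : Prop :=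
  X.length = Y.length ∧ ∃ f : α ≃ α, (∀ a ∈ Sig, f a = a) ∧ X.map f = Y

/-- Length of the shortest prefix of `S` not yet a node of `N`
(defaults to `S.length` if all prefixes are nodes). -/
def insLen {β : Type} [DecidableEq β] (N : Finset (List β)) (S : List β) : ℕ :=
  (((List.range (S.length + 1)).filter (fun m => decide (S.take m ∉ N))).head?).getD S.length

/-- The node set of the sequence hash tree of a sequence of strings,
built incrementally: each step inserts the shortest prefix of the current
string that is not yet a node. -/
def SHTNodes {β : Type} [DecidableEq β] (L : List (List β)) : Finset (List β) :=
  L.foldl (fun N S => insert (S.take (insLen N S)) N) ∅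

/-- The sequence ⟨ε, prev(T[n..]), ..., prev(T[1..])⟩ of previous-encoded
suffixes of `T` in increasing length order. -/
def pphSeq (Sig : Set α) [DecidablePred (· ∈ Sig)] (T : List α) : List (List (α ⊕ ℕ)) :=
  [] :: (List.range T.length).map (fun k => prevEnc Sig (T.drop (T.length - 1 - k)))

/-- The node set of the parameterized position heap `PPH(T)`. -/
def pphNodes (Sig : Set α) [DecidablePred (· ∈ Sig)] (T : List α) : Finset (List (α ⊕ ℕ)) :=
  SHTNodes (pphSeq Sig T)

/-- `a ∈ Σ ∪ {0}` as a character of a previous encoding. -/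
def StaticOrZero (Sig : Set α) (a : α ⊕ ℕ) : Prop :=
  (∃ c ∈ Sig, a = Sum.inl c) ∨ a = Sum.inr 0

/-- Reversed suffix link `rslink(a, v) = u` in a position heap with node set `N`
for a text of length `n`. -/
def RSLink (Sig : Set α) (n : ℕ) (N : Finset (List (α ⊕ ℕ)))
    (a : α ⊕ ℕ) (v u : List (α ⊕ ℕ)) : Prop :=
  v ∈ N ∧ u ∈ N ∧
    ((StaticOrZero Sig a ∧ u = a :: v) ∨
     (∃ d : ℕ, a = Sum.inr d ∧ 1 ≤ d ∧ d ≤ n - 1 ∧ v[d - 1]? = some (Sum.inr 0) ∧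
       u = Sum.inr 0 :: (v.take (d - 1) ++ [Sum.inr d] ++ v.drop d)))

/-!
An entry of `prev(S)` is either a static character or the distance back to the previous
occurrence of the same parameter character, so a bijection fixing `Σ` does not change it.
Conversely, if `prev(X) = prev(Y)`, then `X` and `Y` carry the same static characters at the
same places, and following the backward pointers shows that they have the same equality
pattern: `X[i] = X[j] ↔ Y[i] = Y[j]`. Hence `X[i] ↦ Y[i]` is a well-defined injection on the
finitely many characters of `X` outside `Σ`, and it extends to a permutation of the
complement of `Σ`.
-/

theorem Equiv.Perm.exists_extending_of_injOn {β : Type*} {Sig s : Set β} (hs : s.Finite)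
    {φ : β → β} (hinj : Set.InjOn φ s) (hs_param : ∀ c ∈ s, c ∉ Sig)
    (hφ_param : ∀ c ∈ s, φ c ∉ Sig) :
    ∃ τ : Equiv.Perm β, (∀ a ∈ Sig, τ a = a) ∧ ∀ c ∈ s, τ c = φ c := by
  classical
  have : Finite s := hs
  obtain ⟨σ, hσ⟩ := Equiv.Perm.exists_extending_pair (β := {c // c ∉ Sig})
    (fun c : s => ⟨c, hs_param c c.2⟩) (fun c : s => ⟨φ c, hφ_param c c.2⟩)
    (fun a b h => Subtype.ext (Subtype.mk.inj h))
    (fun a b h => Subtype.ext (hinj a.2 b.2 (Subtype.mk.inj h)))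
  refine ⟨Equiv.Perm.ofSubtype σ,
    fun a ha => Equiv.Perm.ofSubtype_apply_of_not_mem σ (not_not.mpr ha), fun c hc => ?_⟩
  rw [Equiv.Perm.ofSubtype_apply_of_mem σ (hs_param c hc)]
  exact congrArg Subtype.val (hσ ⟨c, hc⟩)

theorem exists_map_getElem?_of_pattern {β : Type*} {X Y : List β} (hlen : X.length = Y.length)
    (hpat : ∀ i j : ℕ, X[i]? = X[j]? → Y[i]? = Y[j]?) :
    ∃ φ : β → β, ∀ (i : ℕ) (c : β), X[i]? = some c → Y[i]? = some (φ c) := by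
  have hex : ∀ c, ∃ b, ∀ i : ℕ, X[i]? = some c → Y[i]? = some b := by
    intro c
    by_cases hcX : c ∈ X
    · obtain ⟨i₀, hi₀, rfl⟩ := List.getElem_of_mem hcX
      refine ⟨Y[i₀], fun i hi => ?_⟩
      rw [hpat i i₀ (hi.trans (List.getElem?_eq_getElem hi₀).symm)]
      exact List.getElem?_eq_getElem _
    · exact ⟨c, fun i hi => absurd (List.mem_of_getElem? hi) hcX⟩
  exact ⟨fun c => (hex c).choose, fun i c => (hex c).choose_spec i⟩

theorem pMatch_of_same_pattern {β : Type} (Sig : Set β) {X Y : List β}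
    (hlen : X.length = Y.length) (hpat : ∀ i j : ℕ, X[i]? = X[j]? ↔ Y[i]? = Y[j]?)
    (hstatic : ∀ i : ℕ, ∀ c ∈ Sig, X[i]? = some c ↔ Y[i]? = some c) : PMatch Sig X Y := by
  obtain ⟨φ, hφ⟩ := exists_map_getElem?_of_pattern hlen fun i j => (hpat i j).mp
  have hφ_param : ∀ {i : ℕ} {c : β}, X[i]? = some c → c ∉ Sig → φ c ∉ Sig := by
    intro i c hi hc hφc
    have := (hstatic i _ hφc).mpr (hφ i c hi)
    rw [hi, Option.some.injEq] at this
    exact hc (this ▸ hφc)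
  have hinj : Set.InjOn φ {c | c ∈ X ∧ c ∉ Sig} := by
    rintro a ⟨haX, -⟩ b ⟨hbX, -⟩ hab
    obtain ⟨i, hi⟩ := List.mem_iff_getElem?.mp haX
    obtain ⟨j, hj⟩ := List.mem_iff_getElem?.mp hbX
    have := (hpat i j).mpr (by rw [hφ i a hi, hφ j b hj, hab])
    rwa [hi, hj, Option.some.injEq] at this
  obtain ⟨τ, hτ_static, hτ⟩ := Equiv.Perm.exists_extending_of_injOn
    (X.finite_toSet.subset fun c hc => hc.1) hinj (fun c hc => hc.2)
    (fun c ⟨hcX, hc⟩ => hφ_param (List.mem_iff_getElem?.mp hcX).choose_spec hc)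
  refine ⟨hlen, τ, hτ_static, List.ext_getElem? fun i => ?_⟩
  rw [List.getElem?_map]
  rcases hi : X[i]? with _ | c
  · rw [Option.map_none, eq_comm, List.getElem?_eq_none_iff]
    rw [List.getElem?_eq_none_iff] at hi
    omega
  rw [Option.map_some]
  by_cases hc : c ∈ Sig
  · rw [hτ_static c hc]
    exact ((hstatic i c hc).mp hi).symm
  · rw [hτ c ⟨List.mem_of_getElem? hi, hc⟩]
    exact (hφ i c hi).symm

section

variable {Sig : Set α} [DecidablePred (· ∈ Sig)]

theorem prevEncAt_eq_inl_iff {S : List α} {i : ℕ} {c : α} :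
    prevEncAt Sig S i = Sum.inl c ↔ S[i]? = some c ∧ c ∈ Sig := by
  unfold prevEncAt
  cases S[i]? with
  | none => simp
  | some a =>
    by_cases ha : a ∈ Sig
    · simp only [ha, if_true, Sum.inl.injEq, Option.some.injEq]
      exact ⟨fun h => ⟨h, h ▸ ha⟩, And.left⟩
    · simp only [ha, if_false, Option.some.injEq]
      constructor
      · intro h; split_ifs at h
      · rintro ⟨rfl, hc⟩; exact absurd hc ha

theorem getElem?_sub_eq_of_prevEncAt_eq_inr {S : List α} {j d : ℕ}
    (h : prevEncAt Sig S j = Sum.inr d) (hd : 0 < d) : S[j - d]? = S[j]? := by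
  unfold prevEncAt at h
  rcases hj : S[j]? with _ | c
  · simp only [hj, Sum.inr.injEq] at h; omega
  simp only [hj] at h
  split_ifs at h with hc hany
  · obtain ⟨i, hij, hi⟩ : ∃ i, i < j ∧ S[i]? = some c := by simpa using hany
    have hg := Nat.findGreatest_le (P := fun k => S[k]? = some c) (j - 1)
    obtain rfl := Sum.inr.inj h
    rw [Nat.sub_sub_self (by omega)]
    exact Nat.findGreatest_spec (P := fun k => S[k]? = some c) (by omega : i ≤ j - 1) hi
  · simp only [Sum.inr.injEq] at h; omega

theorem exists_prevEncAt_eq_inr_of_lt {S : List α} {i j : ℕ} {c : α} (hj : S[j]? = some c)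
    (hc : c ∉ Sig) (hij : i < j) (hi : S[i]? = some c) :
    ∃ k, i ≤ k ∧ k < j ∧ S[k]? = some c ∧ prevEncAt Sig S j = Sum.inr (j - k) := by
  set P : ℕ → Prop := fun k => S[k]? = some c
  have hi' : i ≤ j - 1 := by omega
  have hany : (List.range j).any (fun k => decide (P k)) := by simpa [P] using ⟨i, hij, hi⟩
  refine ⟨Nat.findGreatest P (j - 1), Nat.le_findGreatest hi' hi, ?_,
    Nat.findGreatest_spec (P := P) hi' hi, by simp [prevEncAt, hj, hc, hany, P]⟩
  have := Nat.findGreatest_le (P := P) (j - 1)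
  omega

theorem length_eq_of_prevEnc_eq {X Y : List α} (h : prevEnc Sig X = prevEnc Sig Y) :
    X.length = Y.length := by
  simpa only [prevEnc, List.length_map, List.length_range] using congrArg List.length h

theorem prevEncAt_eq_of_prevEnc_eq {X Y : List α} (h : prevEnc Sig X = prevEnc Sig Y) (i : ℕ) :
    prevEncAt Sig X i = prevEncAt Sig Y i := by
  have hlen := length_eq_of_prevEnc_eq h
  by_cases hi : i < X.length
  · simpa [prevEnc, hi, hlen ▸ hi] using congrArg (·[i]?) h
  · simp [prevEncAt, List.getElem?_eq_none (not_lt.mp hi),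
      List.getElem?_eq_none (hlen ▸ not_lt.mp hi)]

theorem getElem?_eq_some_of_prevEnc_eq {X Y : List α} (h : prevEnc Sig X = prevEnc Sig Y)
    {i : ℕ} {c : α} (hc : c ∈ Sig) (hX : X[i]? = some c) : Y[i]? = some c :=
  (prevEncAt_eq_inl_iff.mp
    (prevEncAt_eq_of_prevEnc_eq h i ▸ prevEncAt_eq_inl_iff.mpr ⟨hX, hc⟩)).1

theorem getElem?_eq_getElem?_of_prevEnc_eq {X Y : List α} (h : prevEnc Sig X = prevEnc Sig Y)
    {i j : ℕ} (hij : X[i]? = X[j]?) : Y[i]? = Y[j]? := by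
  wlog hle : i ≤ j generalizing i j
  · exact (this hij.symm (by omega)).symm
  induction j using Nat.strong_induction_on generalizing i with
  | _ j ih =>
  rcases hle.eq_or_lt with rfl | hlt
  · rfl
  rcases hXj : X[j]? with _ | c
  · have hlen := length_eq_of_prevEnc_eq h
    rw [hXj, List.getElem?_eq_none_iff] at hij
    rw [List.getElem?_eq_none_iff] at hXj
    rw [List.getElem?_eq_none (by omega), List.getElem?_eq_none (by omega)]
  rw [hXj] at hij
  by_cases hc : c ∈ Sig
  · rw [getElem?_eq_some_of_prevEnc_eq h hc hij, getElem?_eq_some_of_prevEnc_eq h hc hXj]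
  obtain ⟨k, hik, hkj, hXk, hk⟩ := exists_prevEncAt_eq_inr_of_lt hXj hc hlt hij
  -- the entry `j - k` of the common encoding makes `k` the previous occurrence in `Y` too
  have hYk : Y[k]? = Y[j]? := by
    have := getElem?_sub_eq_of_prevEncAt_eq_inr
      ((prevEncAt_eq_of_prevEnc_eq h j).symm.trans hk) (by omega)
    rwa [Nat.sub_sub_self hkj.le] at this
  rw [ih k hkj (hij.trans hXk.symm) hik, hYk]

theorem prevEncAt_map {f : α ≃ α} (hf : ∀ a ∈ Sig, f a = a) (S : List α) (i : ℕ) :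
    prevEncAt Sig (S.map f) i = prevEncAt Sig S i := by
  have hmem : ∀ a, f a ∈ Sig ↔ a ∈ Sig := fun a =>
    ⟨fun h => f.injective (hf _ h) ▸ h, fun h => (hf a h).symm ▸ h⟩
  unfold prevEncAt
  rcases hi : S[i]? with _ | c
  · simp [hi]
  by_cases hc : c ∈ Sig <;> simp [hi, hmem, hc, hf]

theorem prevEnc_map {f : α ≃ α} (hf : ∀ a ∈ Sig, f a = a) (S : List α) :
    prevEnc Sig (S.map f) = prevEnc Sig S := by
  simp only [prevEnc, List.length_map]
  exact congrArg (List.map · _) (funext (prevEncAt_map hf S))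

end

theorem stmt0_general (Sig : Set α) [DecidablePred (· ∈ Sig)] (X Y : List α) :
    PMatch Sig X Y ↔ prevEnc Sig X = prevEnc Sig Y := by
  refine ⟨fun ⟨_, f, hf, hmap⟩ => hmap ▸ (prevEnc_map hf X).symm, fun h => ?_⟩
  exact pMatch_of_same_pattern Sig (length_eq_of_prevEnc_eq h)
    (fun _ _ => ⟨getElem?_eq_getElem?_of_prevEnc_eq h,
      getElem?_eq_getElem?_of_prevEnc_eq h.symm⟩)
    (fun _ _ hc => ⟨getElem?_eq_some_of_prevEnc_eq h hc,
      getElem?_eq_some_of_prevEnc_eq h.symm hc⟩)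

theorem stmt0 (Sig Par : Set α) [DecidablePred (· ∈ Sig)]
    (hdisj : Disjoint Sig Par)
    (X Y : List α) (hX : ∀ c ∈ X, c ∈ Sig ∪ Par) (hY : ∀ c ∈ Y, c ∈ Sig ∪ Par)
    (hlen : X.length = Y.length) :
    PMatch Sig X Y ↔ prevEnc Sig X = prevEnc Sig Y :=
  stmt0_general Sig X Y
end

section
/- If prev(T[i..j]) is represented by PPH(T) (i.e., spelled by some root-to-node path), then for every substring X = T[i'..j'] with i ≤ i' ≤ j' ≤ j, prev(X) is represented by PPH(T). -/
open List

variable {α : Type} [DecidableEq α]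

/-!
PPH(T) is the sequence hash tree of the encoded suffixes prev(T[n..]), …, prev(T[1..]), and each
of them is obtained from the next one by `ptail`: drop the first symbol and zero the
back-references that pointed at it, i.e. `ptail (prev S) = prev S.tail`. Inserting, at each step,
the shortest prefix that is not yet a node keeps the node set prefix-closed, and, since `ptail`
commutes with taking prefixes and consecutive strings are linked by `ptail`, the prefix inserted for
a string is at most one symbol longer than the one inserted for its predecessor; hence the node set
is also closed under `ptail`. As `prev` commutes with taking prefixes, the represented encodings
are closed under taking infixes of the underlying p-string.
-/

section SequenceHashTree

variable {β : Type} [DecidableEq β]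

def shtStep (N : Finset (List β)) (S : List β) : Finset (List β) :=
  insert (S.take (insLen N S)) N

lemma insLen_cases (N : Finset (List β)) (S : List β) :
    (insLen N S = S.length ∧ ∀ m ≤ S.length, S.take m ∈ N) ∨
      (insLen N S ≤ S.length ∧ S.take (insLen N S) ∉ N ∧
        ∀ m < insLen N S, S.take m ∈ N) := by
  unfold insLen
  rw [List.head?_filter]
  rcases hfind : (List.range (S.length + 1)).find? (fun m => decide (S.take m ∉ N)) with _ | d
  · left
    simp only [List.find?_eq_none, List.mem_range, decide_eq_true_eq, not_not] at hfind
    exact ⟨rfl, fun m hm => hfind m (by omega)⟩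
  · right
    obtain ⟨hd, k, hk, rfl, hbefore⟩ := List.find?_eq_some_iff_getElem.mp hfind
    simp only [List.length_range, List.getElem_range, decide_eq_true_eq, Bool.not_eq_eq_eq_not,
      Bool.not_true, decide_eq_false_iff_not, not_not, Option.getD_some] at hk hd hbefore ⊢
    exact ⟨by omega, hd, hbefore⟩

lemma insLen_le (N : Finset (List β)) (S : List β) : insLen N S ≤ S.length := by
  rcases insLen_cases N S with ⟨h, -⟩ | ⟨h, -⟩ <;> omega

lemma take_mem_of_lt_insLen {N : Finset (List β)} {S : List β} {m : ℕ} (hm : m < insLen N S) :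
    S.take m ∈ N := by
  rcases insLen_cases N S with ⟨h, hall⟩ | ⟨-, -, hall⟩
  · exact hall m (by omega)
  · exact hall m hm

lemma take_insLen_notMem {N : Finset (List β)} {S : List β} (h : insLen N S < S.length) :
    S.take (insLen N S) ∉ N := by
  rcases insLen_cases N S with ⟨h', -⟩ | ⟨-, hnot, -⟩
  · omega
  · exact hnot

def PrefixClosed (N : Finset (List β)) : Prop :=
  ∀ w ∈ N, ∀ m, w.take m ∈ N

lemma prefixClosed_shtStep {N : Finset (List β)} (hN : PrefixClosed N) (S : List β) :
    PrefixClosed (shtStep N S) := by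
  intro w hw m
  rcases Finset.mem_insert.mp hw with rfl | hw
  · rw [List.take_take]
    rcases le_or_gt (insLen N S) m with hm | hm
    · rw [min_eq_right hm]
      exact Finset.mem_insert_self _ _
    · rw [min_eq_left hm.le]
      exact Finset.mem_insert_of_mem (take_mem_of_lt_insLen hm)
  · exact Finset.mem_insert_of_mem (hN w hw m)

lemma prefixClosed_foldl_shtStep {N : Finset (List β)} (hN : PrefixClosed N) (L : List (List β)) :
    PrefixClosed (L.foldl shtStep N) := by
  induction L generalizing N with
  | nil => exact hN
  | cons S L ih => exact ih (prefixClosed_shtStep hN S)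

lemma prefixClosed_SHTNodes (L : List (List β)) : PrefixClosed (SHTNodes L) :=
  prefixClosed_foldl_shtStep (fun w hw => absurd hw (Finset.notMem_empty w)) L

variable {pt : List β → List β}

lemma insLen_shtStep_le (hpt : ∀ w m, pt (w.take m) = (pt w).take (m - 1))
    {N : Finset (List β)} (hN : Set.MapsTo pt N N) {Sp S : List β} (hS : pt S = Sp)
    (hlen : S.length ≤ Sp.length + 1) :
    insLen (shtStep N Sp) S ≤ insLen N Sp + 1 := by
  by_contra! hlt
  have hS_le := insLen_le (shtStep N Sp) S
  have hSp_le := insLen_le N Sp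
  have hmem : S.take (insLen N Sp + 1) ∈ N := by
    rcases Finset.mem_insert.mp (take_mem_of_lt_insLen hlt) with heq | hmem
    · have := congrArg List.length heq
      simp only [List.length_take] at this
      omega
    · exact hmem
  -- the node `Sp.take (insLen N Sp)` would then have been present before `Sp` was inserted
  have hSp : Sp.take (insLen N Sp) ∈ N := by
    simpa [hpt, hS] using hN hmem
  exact take_insLen_notMem (by omega) hSp

lemma mapsTo_shtStep_shtStep (hpt : ∀ w m, pt (w.take m) = (pt w).take (m - 1))
    {N : Finset (List β)} (hN : Set.MapsTo pt N N) {Sp S : List β}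
    (hN' : Set.MapsTo pt (shtStep N Sp) (shtStep N Sp)) (hpre : PrefixClosed (shtStep N Sp))
    (hS : pt S = Sp) (hlen : S.length ≤ Sp.length + 1) :
    Set.MapsTo pt (shtStep (shtStep N Sp) S) (shtStep (shtStep N Sp) S) := by
  intro w hw
  rcases Finset.mem_insert.mp hw with rfl | hw
  · have hd := insLen_shtStep_le hpt hN hS hlen
    have hnode := hpre _ (Finset.mem_insert_self _ _) (insLen (shtStep N Sp) S - 1)
    rw [List.take_take, min_eq_left (by omega)] at hnode
    rw [hpt, hS]
    exact Finset.mem_insert_of_mem hnode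
  · exact Finset.mem_insert_of_mem (hN' hw)

lemma mapsTo_foldl_shtStep (hpt : ∀ w m, pt (w.take m) = (pt w).take (m - 1))
    (L : List (List β)) {N : Finset (List β)} {Sp : List β} (hN : Set.MapsTo pt N N)
    (hN' : Set.MapsTo pt (shtStep N Sp) (shtStep N Sp)) (hpre : PrefixClosed (shtStep N Sp))
    (hL : (Sp :: L).IsChain fun a b => pt b = a ∧ b.length ≤ a.length + 1) :
    Set.MapsTo pt ↑(L.foldl shtStep (shtStep N Sp)) ↑(L.foldl shtStep (shtStep N Sp)) := by
  induction L generalizing N Sp with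
  | nil => exact hN'
  | cons S L ih =>
    obtain ⟨⟨hS, hlen⟩, hL⟩ := List.isChain_cons_cons.mp hL
    exact ih hN' (mapsTo_shtStep_shtStep hpt hN hN' hpre hS hlen) (prefixClosed_shtStep hpre S) hL

lemma mapsTo_SHTNodes (hpt : ∀ w m, pt (w.take m) = (pt w).take (m - 1))
    {L : List (List β)} (hL : L.IsChain fun a b => pt b = a ∧ b.length ≤ a.length + 1) :
    Set.MapsTo pt (SHTNodes L) (SHTNodes L) := by
  cases L with
  | nil => exact fun w hw => absurd hw (Finset.notMem_empty w)
  | cons S₀ L =>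
    have hfirst : shtStep (∅ : Finset (List β)) S₀ = {[]} := by
      have h0 : insLen (∅ : Finset (List β)) S₀ = 0 := Nat.eq_zero_of_not_pos fun hpos =>
        Finset.notMem_empty _ (take_mem_of_lt_insLen hpos)
      simp [shtStep, h0]
    have hnil : pt [] = [] := by simpa using hpt [] 0
    refine mapsTo_foldl_shtStep hpt L (fun w hw => absurd hw (Finset.notMem_empty w)) ?_ ?_ hL
    · simp [hfirst, Set.MapsTo, hnil]
    · simp [hfirst, PrefixClosed]

end SequenceHashTree

section PrevEncoding

/-- Position `q` of `ptail w` is position `q + 1` of `w`; a back-reference of length `q + 1`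
pointed at the removed first symbol and becomes `0`. -/
def ptailAt {β : Type} (w : List (β ⊕ ℕ)) (q : ℕ) : β ⊕ ℕ :=
  match w[q + 1]? with
  | some (Sum.inr d) => if d = q + 1 then Sum.inr 0 else Sum.inr d
  | some (Sum.inl c) => Sum.inl c
  | none => Sum.inr 0

def ptail {β : Type} (w : List (β ⊕ ℕ)) : List (β ⊕ ℕ) :=
  (List.range (w.length - 1)).map (ptailAt w)

lemma ptail_take {β : Type} (w : List (β ⊕ ℕ)) (m : ℕ) :
    ptail (w.take m) = (ptail w).take (m - 1) := by
  unfold ptail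
  rw [← List.map_take, List.take_range, List.length_take,
    show min m w.length - 1 = min (m - 1) (w.length - 1) by omega]
  refine List.map_congr_left fun q hq => ?_
  rw [List.mem_range] at hq
  simp only [ptailAt, List.getElem?_take, if_pos (show q + 1 < m by omega)]

lemma Nat.exists_greatest_lt_of_exists {P : ℕ → Prop} [DecidablePred P] {i : ℕ}
    (h : ∃ k < i, P k) : ∃ j < i, P j ∧ ∀ k, j < k → k < i → ¬P k := by
  obtain ⟨k, hki, hk⟩ := h
  exact ⟨Nat.findGreatest P (i - 1), by have := Nat.findGreatest_le (P := P) (i - 1); omega,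
    Nat.findGreatest_spec (by omega) hk,
    fun l hl hli => Nat.findGreatest_is_greatest hl (by omega)⟩

variable (Sig : Set α) [DecidablePred (· ∈ Sig)]

lemma prevEncAt_of_mem {S : List α} {i : ℕ} {c : α} (hi : S[i]? = some c) (hc : c ∈ Sig) :
    prevEncAt Sig S i = Sum.inl c := by
  simp [prevEncAt, hi, hc]

lemma prevEncAt_of_last_occurrence {S : List α} {i j : ℕ} {c : α} (hi : S[i]? = some c)
    (hc : c ∉ Sig) (hji : j < i) (hj : S[j]? = some c)
    (hlast : ∀ k, j < k → k < i → S[k]? ≠ some c) :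
    prevEncAt Sig S i = Sum.inr (i - j) := by
  have hany : (List.range i).any (fun k => decide (S[k]? = some c)) = true := by
    simpa using ⟨j, hji, hj⟩
  have hgreatest : Nat.findGreatest (fun k => S[k]? = some c) (i - 1) = j :=
    Nat.findGreatest_eq_iff.mpr ⟨by omega, fun _ => hj, fun k hjk hki => hlast k hjk (by omega)⟩
  simp only [prevEncAt, hi, hc, if_false, hany, if_true, hgreatest]

lemma prevEncAt_of_first_occurrence {S : List α} {i : ℕ} {c : α} (hi : S[i]? = some c)
    (hc : c ∉ Sig) (hfirst : ∀ k < i, S[k]? ≠ some c) :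
    prevEncAt Sig S i = Sum.inr 0 := by
  have hany : (List.range i).any (fun k => decide (S[k]? = some c)) = false := by
    simpa using hfirst
  simp only [prevEncAt, hi, hc, if_false, hany, Bool.false_eq_true]

lemma prevEncAt_congr {S S' : List α} {i : ℕ} (h : ∀ k ≤ i, S[k]? = S'[k]?) :
    prevEncAt Sig S i = prevEncAt Sig S' i := by
  rcases hi : S[i]? with _ | c
  · have hi' : S'[i]? = none := by rw [← h i le_rfl, hi]
    simp [prevEncAt, hi, hi']
  have hi' : S'[i]? = some c := by rw [← h i le_rfl, hi]
  by_cases hc : c ∈ Sig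
  · rw [prevEncAt_of_mem Sig hi hc, prevEncAt_of_mem Sig hi' hc]
  by_cases hocc : ∃ k < i, S[k]? = some c
  · obtain ⟨j, hji, hj, hlast⟩ := Nat.exists_greatest_lt_of_exists hocc
    rw [prevEncAt_of_last_occurrence Sig hi hc hji hj hlast,
      prevEncAt_of_last_occurrence Sig hi' hc hji (by rwa [← h j (by omega)])
        fun k hjk hki => by rw [← h k (by omega)]; exact hlast k hjk hki]
  · push Not at hocc
    rw [prevEncAt_of_first_occurrence Sig hi hc hocc,
      prevEncAt_of_first_occurrence Sig hi' hc fun k hki => by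
        rw [← h k (by omega)]; exact hocc k hki]

lemma length_prevEnc (S : List α) : (prevEnc Sig S).length = S.length := by
  simp [prevEnc]

lemma getElem?_prevEnc {S : List α} {i : ℕ} (hi : i < S.length) :
    (prevEnc Sig S)[i]? = some (prevEncAt Sig S i) := by
  simp [prevEnc, hi]

lemma prevEnc_take (S : List α) (m : ℕ) :
    prevEnc Sig (S.take m) = (prevEnc Sig S).take m := by
  unfold prevEnc
  rw [← List.map_take, List.take_range, List.length_take]
  refine List.map_congr_left fun q hq => prevEncAt_congr Sig fun k hk => ?_
  rw [List.mem_range] at hq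
  rw [List.getElem?_take, if_pos (by omega)]

lemma ptailAt_prevEnc_cons (a : α) {S : List α} {q : ℕ} (hq : q < S.length) :
    ptailAt (prevEnc Sig (a :: S)) q = prevEncAt Sig S q := by
  obtain ⟨c, hc⟩ : ∃ c, S[q]? = some c := ⟨S[q], List.getElem?_eq_getElem hq⟩
  have hc' : (a :: S)[q + 1]? = some c := hc
  rw [ptailAt, getElem?_prevEnc Sig (by simpa using hq)]
  by_cases hcSig : c ∈ Sig
  · simp only [prevEncAt_of_mem Sig hc' hcSig, prevEncAt_of_mem Sig hc hcSig]
  by_cases hocc : ∃ k < q, S[k]? = some c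
  · obtain ⟨j, hjq, hj, hlast⟩ := Nat.exists_greatest_lt_of_exists hocc
    have hlast' : ∀ k, j + 1 < k → k < q + 1 → (a :: S)[k]? ≠ some c := by
      rintro (_ | k) hjk hkq
      · omega
      · exact hlast k (by omega) (by omega)
    rw [prevEncAt_of_last_occurrence Sig hc' hcSig (by omega) hj hlast',
      prevEncAt_of_last_occurrence Sig hc hcSig hjq hj hlast]
    simp only [if_neg (show q + 1 - (j + 1) ≠ q + 1 by omega)]
    congr 1
    omega
  push Not at hocc
  rw [prevEncAt_of_first_occurrence Sig hc hcSig hocc]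
  have hlater : ∀ k, 0 < k → k < q + 1 → (a :: S)[k]? ≠ some c := by
    rintro (_ | k) hk hkq
    · omega
    · exact hocc k (by omega)
  by_cases ha : a = c
  · rw [prevEncAt_of_last_occurrence Sig hc' hcSig (Nat.succ_pos q) (by simpa using ha) hlater]
    simp
  · rw [prevEncAt_of_first_occurrence Sig hc' hcSig fun k hk => ?_]
    · simp
    · rcases k with _ | k
      · simpa using ha
      · exact hlater (k + 1) (by omega) hk

lemma ptail_prevEnc (S : List α) : ptail (prevEnc Sig S) = prevEnc Sig S.tail := by
  cases S with
  | nil => simp [ptail, prevEnc]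
  | cons a S =>
    simp only [ptail, length_prevEnc, List.length_cons, Nat.add_sub_cancel, List.tail_cons]
    exact List.map_congr_left fun q hq =>
      ptailAt_prevEnc_cons Sig a (List.mem_range.mp hq)

end PrevEncoding

section PositionHeap

variable (Sig : Set α) [DecidablePred (· ∈ Sig)]

lemma pphSeq_eq_map_range (T : List α) :
    pphSeq Sig T =
      (List.range (T.length + 1)).map fun k => prevEnc Sig (T.drop (T.length - k)) := by
  rw [List.range_succ_eq_map, List.map_cons, List.map_map, pphSeq, Nat.sub_zero, List.drop_length]
  congr 1
  refine List.map_congr_left fun k _ => ?_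
  simp only [Function.comp_apply]
  congr 2
  omega

lemma isChain_pphSeq (T : List α) :
    (pphSeq Sig T).IsChain fun a b => ptail b = a ∧ b.length ≤ a.length + 1 := by
  rw [pphSeq_eq_map_range, List.isChain_map, List.isChain_range_succ]
  intro k hk
  refine ⟨?_, ?_⟩
  · rw [ptail_prevEnc, List.tail_drop]
    congr 2
    omega
  · simp only [length_prevEnc, List.length_drop]
    omega

lemma prefixClosed_pphNodes (T : List α) : PrefixClosed (pphNodes Sig T) :=
  prefixClosed_SHTNodes _

lemma mapsTo_ptail_pphNodes (T : List α) :
    Set.MapsTo (ptail (β := α)) (pphNodes Sig T) (pphNodes Sig T) :=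
  mapsTo_SHTNodes ptail_take (isChain_pphSeq Sig T)

lemma prevEnc_mem_of_isInfix {N : Finset (List (α ⊕ ℕ))} (hpre : PrefixClosed N)
    (hptail : Set.MapsTo (ptail (β := α)) N N) {X Y : List α}
    (hX : prevEnc Sig X ∈ N) (hYX : Y <:+: X) : prevEnc Sig Y ∈ N := by
  obtain ⟨s, t, rfl⟩ := hYX
  have hdrop : ∀ k, prevEnc Sig ((s ++ Y ++ t).drop k) ∈ N := by
    intro k
    induction k with
    | zero => simpa using hX
    | succ k ih => simpa [ptail_prevEnc, List.tail_drop] using hptail ih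
  have hsuffix := hpre _ (hdrop s.length) Y.length
  rwa [← prevEnc_take, List.append_assoc, List.drop_left, List.take_left] at hsuffix

end PositionHeap

lemma List.take_drop_isInfix_take_drop {β : Type} (l : List β) {a b c d : ℕ} (hca : c ≤ a)
    (hbd : a + b ≤ c + d) : (l.drop a).take b <:+: (l.drop c).take d := by
  have hdrop : l.drop a = (l.drop c).drop (a - c) := by
    rw [List.drop_drop]
    congr 1
    omega
  rw [hdrop, List.take_drop]
  exact (List.drop_suffix _ _).isInfix.trans
    (List.take_prefix_take_left (by omega)).isInfix

theorem stmt13_general (Sig : Set α) [DecidablePred (· ∈ Sig)] (T : List α)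
    (i j : ℕ)
    (h : prevEnc Sig ((T.drop (i - 1)).take (j - i + 1)) ∈ pphNodes Sig T) :
    ∀ i' j', i ≤ i' → i' ≤ j' → j' ≤ j →
      prevEnc Sig ((T.drop (i' - 1)).take (j' - i' + 1)) ∈ pphNodes Sig T := by
  intro i' j' hii' hi'j' hj'j
  exact prevEnc_mem_of_isInfix Sig (prefixClosed_pphNodes Sig T) (mapsTo_ptail_pphNodes Sig T) h
    (List.take_drop_isInfix_take_drop T (by omega) (by omega))

theorem stmt13 (Sig : Set α) [DecidablePred (· ∈ Sig)] (T : List α)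
    (i j : ℕ) (h1 : 1 ≤ i) (h2 : i ≤ j) (h3 : j ≤ T.length)
    (h : prevEnc Sig ((T.drop (i - 1)).take (j - i + 1)) ∈ pphNodes Sig T) :
    ∀ i' j', i ≤ i' → i' ≤ j' → j' ≤ j →
      prevEnc Sig ((T.drop (i' - 1)).take (j' - i' + 1)) ∈ pphNodes Sig T :=
  stmt13_general Sig T i j h
end

section
/- For a p-string T of length n, computing prev(T[i−1..]) from prev(T[i..]) only requires changing the first entry and at most one later entry: prev(T[i−1..]) = c · prev(T[i..]) with the entry at the position of the first occurrence of T[i−1] in T[i..] (if any, at distance d) changed from 0 to d, where c = T[i−1] if T[i−1] ∈ Σ and c = 0 otherwise. -/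
open List

variable {α : Type} [DecidableEq α]

/-!
Prepending `c₀` to `S` shifts every position by one. The only entry whose value changes is
the one at the first occurrence of a parameter character `c₀` in `S`: that occurrence had no
predecessor (entry `0`), and now its predecessor is the new first character. Every later
occurrence of `c₀` still finds its nearest predecessor inside `S`, at the same distance.
-/

theorem Nat.findGreatest_succ_eq_findGreatest_add_one {P Q : ℕ → Prop} [DecidablePred P]
    [DecidablePred Q] {n : ℕ} (hQ : ∀ j, Q (j + 1) ↔ P j) (hP : ∃ j ≤ n, P j) :
    Nat.findGreatest Q (n + 1) = Nat.findGreatest P n + 1 := by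
  obtain ⟨j, hjn, hj⟩ := hP
  have hPk : P (Nat.findGreatest P n) := Nat.findGreatest_spec hjn hj
  have hlow : Nat.findGreatest P n + 1 ≤ Nat.findGreatest Q (n + 1) :=
    Nat.le_findGreatest (by simpa using Nat.findGreatest_le n) ((hQ _).2 hPk)
  obtain ⟨m, hm⟩ : ∃ m, Nat.findGreatest Q (n + 1) = m + 1 :=
    Nat.exists_eq_add_one.2 (by omega)
  have hQm : Q (m + 1) :=
    hm ▸ Nat.findGreatest_spec (by simpa using Nat.findGreatest_le n) ((hQ _).2 hPk)
  have hmn : m ≤ n := by have := Nat.findGreatest_le (P := Q) (n + 1); omega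
  have := Nat.le_findGreatest hmn ((hQ m).1 hQm)
  omega

theorem List.idxOf_le_of_getElem?_eq_some {α : Type*} [DecidableEq α] {l : List α} {a : α}
    {j : ℕ} (h : l[j]? = some a) : l.idxOf a ≤ j := by
  obtain ⟨hj, rfl⟩ := List.getElem?_eq_some_iff.1 h
  by_contra! hlt
  simpa using List.not_of_lt_findIdx (p := (· == l[j])) hlt

section PrevEncCons

variable {Sig : Set α} [DecidablePred (· ∈ Sig)]

theorem prevEncAt_cons_zero (c₀ : α) (S : List α) :
    prevEncAt Sig (c₀ :: S) 0 = if c₀ ∈ Sig then Sum.inl c₀ else Sum.inr 0 := by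
  simp [prevEncAt]

theorem prevEncAt_cons_succ {c₀ c : α} {S : List α} {i : ℕ} (hc : S[i]? = some c)
    (hprev : c₀ = c → c ∉ Sig → ∃ j < i, S[j]? = some c) :
    prevEncAt Sig (c₀ :: S) (i + 1) = prevEncAt Sig S i := by
  by_cases hs : c ∈ Sig
  · simp [prevEncAt, hc, hs]
  by_cases hocc : ∃ j < i, S[j]? = some c
  · obtain ⟨j, hj, hSj⟩ := hocc
    have hfg : Nat.findGreatest (fun j => (c₀ :: S)[j]? = some c) i
        = Nat.findGreatest (fun j => S[j]? = some c) (i - 1) + 1 := by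
      obtain ⟨k, rfl⟩ := Nat.exists_eq_add_one.2 (pos_of_gt hj)
      exact Nat.findGreatest_succ_eq_findGreatest_add_one (by simp) ⟨j, by omega, hSj⟩
    have hle := Nat.findGreatest_le (P := fun j => S[j]? = some c) (i - 1)
    simp only [prevEncAt, List.getElem?_cons_succ, hc, hs, if_false, List.any_eq_true,
      List.mem_range, decide_eq_true_eq, Nat.add_sub_cancel, hfg]
    rw [if_pos ⟨j + 1, by omega, by simpa using hSj⟩, if_pos ⟨j, hj, hSj⟩]
    congr 1
    omega
  · have hne : c₀ ≠ c := fun h => hocc (hprev h hs)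
    have hocc' : ¬ ∃ j < i + 1, (c₀ :: S)[j]? = some c := by
      rintro ⟨_ | j, hj, hSj⟩
      · exact hne (by simpa using hSj)
      · exact hocc ⟨j, by omega, by simpa using hSj⟩
    simp only [prevEncAt, List.getElem?_cons_succ, hc, hs, if_false, List.any_eq_true,
      List.mem_range, decide_eq_true_eq]
    rw [if_neg hocc', if_neg hocc]

theorem prevEncAt_cons_idxOf_succ {c₀ : α} {S : List α} (hc₀ : c₀ ∉ Sig) (hmem : c₀ ∈ S) :
    prevEncAt Sig (c₀ :: S) (S.idxOf c₀ + 1) = Sum.inr (S.idxOf c₀ + 1) := by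
  have hlt : S.idxOf c₀ < S.length := List.idxOf_lt_length_iff.2 hmem
  have hfirst : Nat.findGreatest (fun j => (c₀ :: S)[j]? = some c₀) (S.idxOf c₀) = 0 := by
    rw [Nat.findGreatest_eq_zero_iff]
    rintro (_ | j) hpos hj hSj
    · omega
    · have := List.idxOf_le_of_getElem?_eq_some (by simpa using hSj)
      omega
  simp only [prevEncAt, List.getElem?_cons_succ, List.getElem?_eq_getElem hlt,
    List.getElem_idxOf hlt, hc₀, if_false, List.any_eq_true, List.mem_range,
    decide_eq_true_eq, Nat.add_sub_cancel, hfirst, Nat.sub_zero]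
  rw [if_pos ⟨0, by omega, rfl⟩]

theorem prevEnc_cons (c₀ : α) (S : List α) :
    prevEnc Sig (c₀ :: S) = (if c₀ ∈ Sig then Sum.inl c₀ else Sum.inr 0) ::
      (List.range S.length).map (fun i => prevEncAt Sig (c₀ :: S) (i + 1)) := by
  simp [prevEnc, List.range_succ_eq_map, prevEncAt_cons_zero]

theorem prevEnc_cons_eq_cons_prevEnc {c₀ : α} {S : List α} (h : c₀ ∈ Sig ∨ c₀ ∉ S) :
    prevEnc Sig (c₀ :: S) = (if c₀ ∈ Sig then Sum.inl c₀ else Sum.inr 0) :: prevEnc Sig S := by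
  rw [prevEnc_cons, prevEnc]
  congr 1
  refine List.map_congr_left fun i hi => ?_
  have hi : i < S.length := List.mem_range.1 hi
  refine prevEncAt_cons_succ (List.getElem?_eq_getElem hi) fun heq hs => ?_
  subst heq
  exact (h.resolve_left hs (S.getElem_mem hi)).elim

theorem prevEnc_cons_of_mem {c₀ : α} {S : List α} (hc₀ : c₀ ∉ Sig) (hmem : c₀ ∈ S) :
    prevEnc Sig (c₀ :: S) =
      Sum.inr 0 :: (prevEnc Sig S).set (S.idxOf c₀) (Sum.inr (S.idxOf c₀ + 1)) := by
  have hlt : S.idxOf c₀ < S.length := List.idxOf_lt_length_iff.2 hmem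
  rw [prevEnc_cons, if_neg hc₀]
  congr 1
  refine List.ext_getElem (by simp [prevEnc]) fun i hi _ => ?_
  have hi : i < S.length := by simpa using hi
  simp only [List.getElem_map, List.getElem_range, List.getElem_set]
  split_ifs with hidx
  · exact hidx ▸ prevEncAt_cons_idxOf_succ hc₀ hmem
  · simp only [prevEnc, List.getElem_map, List.getElem_range]
    refine prevEncAt_cons_succ (List.getElem?_eq_getElem hi) fun heq _ => ⟨S.idxOf c₀, ?_, ?_⟩
    · have := List.idxOf_le_of_getElem?_eq_some (l := S) (j := i) (a := c₀)
        (by rw [List.getElem?_eq_getElem hi, heq])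
      omega
    · rw [List.getElem?_eq_getElem hlt, List.getElem_idxOf hlt, heq]

end PrevEncCons

theorem stmt19_general (Sig Par : Set α) [DecidablePred (· ∈ Sig)]
    (hdisj : Disjoint Sig Par) (c0 : α) (S : List α) :
    (c0 ∈ Sig → prevEnc Sig (c0 :: S) = Sum.inl c0 :: prevEnc Sig S) ∧
    (c0 ∈ Par → c0 ∉ S → prevEnc Sig (c0 :: S) = Sum.inr 0 :: prevEnc Sig S) ∧
    (c0 ∈ Par → c0 ∈ S →
      prevEnc Sig (c0 :: S) =
        Sum.inr 0 :: (prevEnc Sig S).set (S.idxOf c0)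
          (Sum.inr (S.idxOf c0 + 1))) := by
  refine ⟨fun hSig => ?_, fun hPar hnotMem => ?_, fun hPar => ?_⟩
  · rw [prevEnc_cons_eq_cons_prevEnc (.inl hSig), if_pos hSig]
  · rw [prevEnc_cons_eq_cons_prevEnc (.inr hnotMem), if_neg (hdisj.notMem_of_mem_right hPar)]
  · exact prevEnc_cons_of_mem (hdisj.notMem_of_mem_right hPar)

theorem stmt19 (Sig Par : Set α) [DecidablePred (· ∈ Sig)]
    (hdisj : Disjoint Sig Par) (c0 : α) (S : List α)
    (hc0 : c0 ∈ Sig ∪ Par) (hS : ∀ c ∈ S, c ∈ Sig ∪ Par) :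
    (c0 ∈ Sig → prevEnc Sig (c0 :: S) = Sum.inl c0 :: prevEnc Sig S) ∧
    (c0 ∈ Par → c0 ∉ S → prevEnc Sig (c0 :: S) = Sum.inr 0 :: prevEnc Sig S) ∧
    (c0 ∈ Par → c0 ∈ S →
      prevEnc Sig (c0 :: S) =
        Sum.inr 0 :: (prevEnc Sig S).set (S.idxOf c0)
          (Sum.inr (S.idxOf c0 + 1))) :=
  stmt19_general Sig Par hdisj c0 S
end
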